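/- Fix i ∈ ℕ and work in the free group F_{2i+7} with free generators e_1, …, e_{2i+7}. Let B := Subgroup.closure ({e_1,e_2,e_3} ∪ {⁅e_{2j+2},e_{2j+3}⁆ : 1 ≤ j ≤ i} ∪ {⁅e_{2i+4},e_{2i+5}⁆·⁅e_{2i+6},e_{2i+7}⁆}), and let Aut_B denote the set of group automorphisms φ of F_{2i+7} satisfying φ b = b for every b ∈ B. If g ∈ F_{2i+7} is such that the orbit {φ g : φ ∈ Aut_B} is a finite set, then g ∈ B. -/

import Mathlib

/-!
For `n : ℤ` let `φₙ` conjugate each generator by the `n`-th power of the element `c_b` attached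
to its block: the block `{e₁, e₂, e₃}` has `c₀ = 1`, the block `{e_{2j+2}, e_{2j+3}}` has
`c_j = ⁅e_{2j+2}, e_{2j+3}⁆`, and the block `{e_{2i+4}, …, e_{2i+7}}` has
`c_{i+1} = ⁅e_{2i+4}, e_{2i+5}⁆ ⁅e_{2i+6}, e_{2i+7}⁆`. These automorphisms fix `B` and satisfy
`φₘ φₙ = φ_{m+n}`, so a finite orbit forces `φₙ g = g` for some `n ≠ 0`.

Writing `F_{2i+7}` as the free product of the free groups on the blocks, `φₙ` acts letterwise on
reduced words, so `g` is a product of block elements commuting with `c_b ^ n`. In a free group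
two commuting elements, and two elements with a common nonzero power, are powers of one element
(subgroups of free groups are free). Since `c_b` (`b ≠ 0`) maps to the central generator of the
Heisenbergenberg group, it is not a proper power, so its centralizer is generated by `c_b`, whence
`g ∈ B`.
-/

open scoped commutatorElement

/-- The integer Heisenberg group; `⟨a, b, c⟩` is `[[1, a, c], [0, 1, b], [0, 0, 1]]`. -/
@[ext] structure Heisenberg where
  a : ℤ
  b : ℤ
  c : ℤ

namespace Heisenberg

instance : Mul Heisenberg := ⟨fun x y => ⟨x.a + y.a, x.b + y.b, x.c + y.c + x.a * y.b⟩⟩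
instance : One Heisenberg := ⟨⟨0, 0, 0⟩⟩
instance : Inv Heisenberg := ⟨fun x => ⟨-x.a, -x.b, x.a * x.b - x.c⟩⟩

@[simp] lemma mul_a (x y : Heisenberg) : (x * y).a = x.a + y.a := rfl
@[simp] lemma mul_b (x y : Heisenberg) : (x * y).b = x.b + y.b := rfl
@[simp] lemma mul_c (x y : Heisenberg) : (x * y).c = x.c + y.c + x.a * y.b := rfl
@[simp] lemma one_a : (1 : Heisenberg).a = 0 := rfl
@[simp] lemma one_b : (1 : Heisenberg).b = 0 := rfl
@[simp] lemma one_c : (1 : Heisenberg).c = 0 := rfl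
@[simp] lemma inv_a (x : Heisenberg) : x⁻¹.a = -x.a := rfl
@[simp] lemma inv_b (x : Heisenberg) : x⁻¹.b = -x.b := rfl
@[simp] lemma inv_c (x : Heisenberg) : x⁻¹.c = x.a * x.b - x.c := rfl

instance : Group Heisenberg where
  mul_assoc x y z := by ext <;> simp <;> ring
  one_mul x := by ext <;> simp
  mul_one x := by ext <;> simp
  inv_mul_cancel x := by ext <;> simp

def X : Heisenberg := ⟨1, 0, 0⟩
def Y : Heisenberg := ⟨0, 1, 0⟩
def Z : Heisenberg := ⟨0, 0, 1⟩

lemma commutatorElement_X_Y : ⁅X, Y⁆ = Z := by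
  ext <;> simp [commutatorElement_def, X, Y, Z]

lemma Z_ne_one : Z ≠ 1 := fun h => by simpa [Z] using congrArg c h

def abelianization : Heisenberg →* Multiplicative (ℤ × ℤ) where
  toFun x := .ofAdd (x.a, x.b)
  map_one' := rfl
  map_mul' _ _ := rfl

def center : Multiplicative ℤ →* Heisenberg where
  toFun n := ⟨0, 0, n.toAdd⟩
  map_one' := rfl
  map_mul' _ _ := by ext <;> simp

lemma eq_center_of_abelianization_eq_one {s : Heisenberg} (h : abelianization s = 1) :
    s = center (.ofAdd s.c) := by
  have h' := congrArg Multiplicative.toAdd h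
  simp only [abelianization, MonoidHom.coe_mk, OneHom.coe_mk, toAdd_ofAdd, toAdd_one,
    Prod.mk_eq_zero] at h'
  ext <;> simp [center, h'.1, h'.2]

lemma eq_one_or_eq_neg_one_of_zpow_eq_Z {s : Heisenberg} {n : ℤ} (h : s ^ n = Z) :
    n = 1 ∨ n = -1 := by
  have hn : n ≠ 0 := by rintro rfl; exact Z_ne_one (by simpa using h.symm)
  have hab : abelianization s = 1 := by
    have h' := congrArg (fun x => (abelianization x).toAdd) h
    simp only [map_zpow, toAdd_zpow] at h'
    exact (smul_eq_zero.1 h').resolve_left hn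
  rw [eq_center_of_abelianization_eq_one hab, ← map_zpow] at h
  have hc := congrArg c h
  simp only [center, MonoidHom.coe_mk, OneHom.coe_mk, toAdd_zpow, toAdd_ofAdd, Int.zsmul_eq_mul,
    Z] at hc
  exact Int.eq_one_or_neg_one_of_mul_eq_one hc

end Heisenberg

open Subgroup

theorem FreeGroup.isCyclic_of_subsingleton {α : Type*} [Subsingleton α] :
    IsCyclic (FreeGroup α) := by
  rcases isEmpty_or_nonempty α with _ | ⟨⟨a⟩⟩
  · infer_instance
  · refine isCyclic_iff_exists_zpowers_eq_top.2 ⟨of a, eq_top_iff.2 ?_⟩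
    rw [← closure_range_of, closure_le]
    rintro _ ⟨x, rfl⟩
    exact Subsingleton.elim a x ▸ mem_zpowers (of a)

-- `p, q` generate `ℤ²`, so `det (p, q) = ±1`; but `k • p = m • q` gives `k * det (p, q) = 0`.
lemma eq_zero_of_zsmul_eq_zsmul_of_generate {p q : ℤ × ℤ} {k m u₁ v₁ u₂ v₂ : ℤ}
    (h₁ : u₁ • p + v₁ • q = (1, 0)) (h₂ : u₂ • p + v₂ • q = (0, 1)) (h : k • p = m • q) :
    k = 0 := by
  simp only [Prod.ext_iff, Prod.fst_add, Prod.snd_add, Prod.smul_fst, Prod.smul_snd,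
    smul_eq_mul] at h₁ h₂ h
  obtain ⟨e₁, e₂⟩ := h₁
  obtain ⟨e₃, e₄⟩ := h₂
  linear_combination (u₁ * v₂ - v₁ * u₂) * (q.2 * h.1 - q.1 * h.2)
    - k * ((u₁ * p.1 + v₁ * q.1) * e₄ + e₁ - (u₁ * p.2 + v₁ * q.2) * e₃)

namespace IsFreeGroup

variable {G : Type*} [Group G] [IsFreeGroup G]

theorem isCyclic_of_subsingleton_generators [Subsingleton (Generators G)] : IsCyclic G :=
  have := FreeGroup.isCyclic_of_subsingleton (α := Generators G)
  isCyclic_of_surjective (mulEquiv G) (mulEquiv G).surjective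

theorem subsingleton_generators_of_isMulCommutative [IsMulCommutative G] :
    Subsingleton (Generators G) := by
  classical
  by_contra hns
  obtain ⟨a, b, hab⟩ := not_subsingleton_iff_nontrivial.1 hns
  let ψ : G →* Equiv.Perm (Fin 3) :=
    lift fun s => if s = a then Equiv.swap 0 1 else Equiv.swap 1 2
  have hψ := congrArg ψ ((IsMulCommutative.is_comm (M := G)).comm (of a) (of b))
  simp only [map_mul, ψ, lift_of, if_neg hab.symm] at hψ
  exact absurd hψ (by decide)

theorem subsingleton_generators_of_zpow_eq_zpow {x y : G} (hxy : closure {x, y} = ⊤)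
    {k m : ℤ} (hk : k ≠ 0) (h : x ^ k = y ^ m) : Subsingleton (Generators G) := by
  classical
  by_contra hns
  obtain ⟨a, b, hab⟩ := not_subsingleton_iff_nontrivial.1 hns
  let Φ : G →* Multiplicative (ℤ × ℤ) :=
    lift fun s => .ofAdd (if s = a then (1, 0) else if s = b then (0, 1) else 0)
  have hspan (z : G) : ∃ u v : ℤ, u • (Φ x).toAdd + v • (Φ y).toAdd = (Φ z).toAdd := by
    have hz : Φ z ∈ Subgroup.closure {Φ x, Φ y} := by
      rw [← Set.image_pair, ← MonoidHom.map_closure, hxy]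
      exact mem_map_of_mem Φ (mem_top z)
    obtain ⟨u, v, huv⟩ := mem_closure_pair.1 hz
    exact ⟨u, v, by rw [← huv]; rfl⟩
  obtain ⟨u₁, v₁, h₁⟩ := hspan (of a)
  obtain ⟨u₂, v₂, h₂⟩ := hspan (of b)
  have hΦa : (Φ (of a)).toAdd = (1, 0) := by simp [Φ]
  have hΦb : (Φ (of b)).toAdd = (0, 1) := by simp [Φ, hab.symm]
  have hΦ : k • (Φ x).toAdd = m • (Φ y).toAdd := by
    simpa only [map_zpow, toAdd_zpow] using congrArg (fun z => (Φ z).toAdd) h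
  exact hk (eq_zero_of_zsmul_eq_zsmul_of_generate (h₁.trans hΦa) (h₂.trans hΦb) hΦ)

lemma exists_mem_zpowers_of_subsingleton_generators {x y : G}
    [Subsingleton (Generators (closure {x, y}))] :
    ∃ r : G, x ∈ zpowers r ∧ y ∈ zpowers r := by
  obtain ⟨r, hr⟩ :=
    (isCyclic_of_subsingleton_generators (G := closure {x, y})).exists_generator
  have hmem (z : G) (hz : z ∈ closure {x, y}) : z ∈ zpowers (r : G) := by
    obtain ⟨t, ht⟩ := mem_zpowers_iff.1 (hr ⟨z, hz⟩)
    exact mem_zpowers_iff.2 ⟨t, by simpa using congrArg Subtype.val ht⟩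
  exact ⟨r, hmem x (subset_closure (by simp)), hmem y (subset_closure (by simp))⟩

theorem exists_mem_zpowers_of_commute {x y : G} (h : Commute x y) :
    ∃ r : G, x ∈ zpowers r ∧ y ∈ zpowers r := by
  have : Subsingleton (Generators (closure {x, y})) := by
    have : IsMulCommutative (closure {x, y}) := isMulCommutative_closure <| by
      rintro a (rfl | rfl) b (rfl | rfl) <;> first | rfl | exact h.eq | exact h.eq.symm
    exact subsingleton_generators_of_isMulCommutative
  exact exists_mem_zpowers_of_subsingleton_generators

theorem exists_mem_zpowers_of_zpow_eq_zpow {x y : G} {k m : ℤ} (hk : k ≠ 0)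
    (h : x ^ k = y ^ m) : ∃ r : G, x ∈ zpowers r ∧ y ∈ zpowers r := by
  have : Subsingleton (Generators (closure {x, y})) := by
    refine subsingleton_generators_of_zpow_eq_zpow (x := ⟨x, subset_closure (by simp)⟩)
      (y := ⟨y, subset_closure (by simp)⟩) ?_ hk (Subtype.ext (by simpa using h))
    convert closure_closure_coe_preimage (k := {x, y}) using 2
    ext z
    simp [Subtype.ext_iff]
  exact exists_mem_zpowers_of_subsingleton_generators

end IsFreeGroup

-- `θ w = Z` certifies that `w` is not a proper power.
theorem FreeGroup.mem_zpowers_of_commute_zpow {Y : Type*} {w x : FreeGroup Y}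
    {θ : FreeGroup Y →* Heisenberg} (hw : θ w = Heisenberg.Z) {n : ℤ} (hn : n ≠ 0)
    (h : Commute x (w ^ n)) : x ∈ zpowers w := by
  have hwn : w ^ n ≠ 1 := fun h₁ => Heisenberg.Z_ne_one <| by
    rw [← hw, (IsMulTorsionFree.zpow_eq_one_iff_left hn).1 h₁, θ.map_one]
  obtain ⟨r, hxr, hwr⟩ := IsFreeGroup.exists_mem_zpowers_of_commute h
  obtain ⟨k, hk⟩ := mem_zpowers_iff.1 hwr
  have hk₀ : k ≠ 0 := by rintro rfl; exact hwn (by simpa using hk.symm)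
  obtain ⟨s, hrs, hws⟩ := IsFreeGroup.exists_mem_zpowers_of_zpow_eq_zpow hk₀ hk
  obtain ⟨β, hβ⟩ := mem_zpowers_iff.1 hws
  have hsw : zpowers s = zpowers w := by
    rcases Heisenberg.eq_one_or_eq_neg_one_of_zpow_eq_Z (s := θ s) (n := β)
      (by rw [← map_zpow, hβ, hw]) with rfl | rfl
    · rw [← hβ, zpow_one]
    · rw [← hβ, zpow_neg_one, zpowers_inv]
  exact hsw ▸ zpowers_le.2 hrs hxr

namespace Monoid.CoprodI

variable {ι : Type*} {G : ι → Type*} [∀ i, Group (G i)]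

def Word.map (f : ∀ i, G i →* G i) (hf : ∀ i, Function.Injective (f i)) (w : Word G) :
    Word G where
  toList := w.toList.map fun l => ⟨l.1, f l.1 l.2⟩
  ne_one l hl := by
    obtain ⟨l', hl', rfl⟩ := List.mem_map.1 hl
    exact fun h => w.ne_one l' hl' (hf l'.1 (h.trans (map_one _).symm))
  chain_ne := (List.isChain_map _).2 w.chain_ne

lemma Word.prod_map (f : ∀ i, G i →* G i) (hf : ∀ i, Function.Injective (f i)) (w : Word G) :
    (w.map f hf).prod = lift (fun i => of.comp (f i)) w.prod := by
  simp [Word.map, Word.prod, map_list_prod, Function.comp_def]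

-- Reduced words are unique, so a fixed point of the letterwise map has fixed letters.
theorem mem_closure_fixedPoints_of_lift_eq_self (f : ∀ i, G i →* G i)
    (hf : ∀ i, Function.Injective (f i)) {x : CoprodI G}
    (hx : lift (fun i => of.comp (f i)) x = x) :
    x ∈ closure (⋃ i, of '' {m : G i | f i m = m}) := by
  classical
  obtain ⟨w, rfl⟩ := Word.equiv.symm.surjective x
  have hw : w.map f hf = w :=
    Word.equiv.symm.injective (show (w.map f hf).prod = w.prod by rw [Word.prod_map]; exact hx)
  have hletters : ∀ l ∈ w.toList, f l.1 l.2 = l.2 := by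
    intro l hl
    have := List.map_eq_map_iff.1 ((congrArg Word.toList hw).trans w.toList.map_id.symm) l hl
    exact eq_of_heq (Sigma.mk.inj_iff.1 this).2
  refine list_prod_mem fun u hu => ?_
  obtain ⟨l, hl, rfl⟩ := List.mem_map.1 hu
  exact subset_closure (Set.mem_iUnion.2 ⟨l.1, l.2, hletters l hl, rfl⟩)

end Monoid.CoprodI

open Monoid

namespace FreeGroup

variable {X ι : Type*} (p : X → ι)

def blockSubgroup (b : ι) : Subgroup (FreeGroup X) := closure (of '' {x | p x = b})

lemma range_map_subtypeVal (b : ι) :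
    (map (Subtype.val : {x // p x = b} → X)).range = blockSubgroup p b := by
  rw [range_map, Subtype.range_coe_subtype]
  rfl

def blockBasis : FreeGroupBasis X (CoprodI fun b => FreeGroup {x // p x = b}) :=
  (CoprodI.FreeGroupBasis.coprodI fun b => FreeGroupBasis.ofFreeGroup {x // p x = b}).reindex
    (Equiv.sigmaFiberEquiv p)

def blockDecomposition : CoprodI (fun b => FreeGroup {x // p x = b}) ≃* FreeGroup X :=
  (blockBasis p).repr

lemma blockDecomposition_of {b : ι} (m : FreeGroup {x // p x = b}) :
    blockDecomposition p (CoprodI.of m) = map Subtype.val m := by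
  suffices (blockDecomposition p).toMonoidHom.comp (CoprodI.of (i := b)) = map Subtype.val from
    DFunLike.congr_fun this m
  ext y
  obtain ⟨x, rfl⟩ := y
  exact (blockBasis p).repr_apply_coe x

variable (c : ι → FreeGroup X)

def blockConj (n : ℤ) : FreeGroup X →* FreeGroup X :=
  lift fun x => MulAut.conj (c (p x) ^ n) (of x)

variable {p c}

@[simp] lemma blockConj_of (n : ℤ) (x : X) :
    blockConj p c n (of x) = MulAut.conj (c (p x) ^ n) (of x) :=
  lift_apply_of

lemma blockConj_apply_of_mem {b : ι} {h : FreeGroup X} (hh : h ∈ blockSubgroup p b) (n : ℤ) :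
    blockConj p c n h = MulAut.conj (c b ^ n) h := by
  refine MonoidHom.eqOn_closure (g := (MulAut.conj (c b ^ n)).toMonoidHom) ?_ hh
  rintro _ ⟨x, rfl, rfl⟩
  simp [blockConj]

lemma blockConj_eq_self_of_commute {b : ι} {h : FreeGroup X} (hh : h ∈ blockSubgroup p b)
    (hcomm : Commute h (c b)) (n : ℤ) : blockConj p c n h = h := by
  rw [blockConj_apply_of_mem hh, MulAut.conj_apply, (hcomm.zpow_right n).symm.eq,
    mul_inv_cancel_right]

lemma blockConj_zero : blockConj p c 0 = MonoidHom.id _ := by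
  ext x
  simp

lemma blockConj_add (hc : ∀ b, c b ∈ blockSubgroup p b) (m n : ℤ) :
    blockConj p c (m + n) = (blockConj p c m).comp (blockConj p c n) := by
  ext x
  have hx : MulAut.conj (c (p x) ^ n) (of x) ∈ blockSubgroup p (p x) :=
    mul_mem (mul_mem (zpow_mem (hc _) n) (subset_closure ⟨x, rfl, rfl⟩))
      (inv_mem (zpow_mem (hc _) n))
  rw [MonoidHom.comp_apply, blockConj_of, blockConj_of, blockConj_apply_of_mem hx, zpow_add,
    _root_.map_mul, MulAut.mul_apply]

def blockConjEquiv (hc : ∀ b, c b ∈ blockSubgroup p b) (n : ℤ) : FreeGroup X ≃* FreeGroup X :=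
  MonoidHom.toMulEquiv (blockConj p c n) (blockConj p c (-n))
    (by rw [← blockConj_add hc, neg_add_cancel, blockConj_zero])
    (by rw [← blockConj_add hc, add_neg_cancel, blockConj_zero])

lemma exists_blockConj_eq_self_of_finite (hc : ∀ b, c b ∈ blockSubgroup p b) {g : FreeGroup X}
    {S : Set (FreeGroup X)} (hS : S.Finite) (hgS : ∀ n, blockConj p c n g ∈ S) :
    ∃ n ≠ 0, blockConj p c n g = g := by
  obtain ⟨s, t, hst, h⟩ := hS.exists_lt_map_eq_of_forall_mem hgS
  refine ⟨-s + t, by omega, ?_⟩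
  calc blockConj p c (-s + t) g = blockConj p c (-s) (blockConj p c t g) := by
        rw [blockConj_add hc]; rfl
    _ = blockConj p c (-s + s) g := by rw [← h, blockConj_add hc]; rfl
    _ = g := by rw [neg_add_cancel, blockConj_zero]; rfl

lemma blockConj_comp_blockDecomposition {c' : ∀ b, FreeGroup {x // p x = b}}
    (hc' : ∀ b, map Subtype.val (c' b) = c b) (n : ℤ) :
    (blockConj p c n).comp (blockDecomposition p).toMonoidHom =
      (blockDecomposition p).toMonoidHom.comp
        (CoprodI.lift (M := fun b => FreeGroup {x // p x = b})
          fun b => CoprodI.of.comp (MulAut.conj (c' b ^ n)).toMonoidHom) := by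
  refine CoprodI.ext_hom _ _ fun b => MonoidHom.ext fun m => ?_
  have hm : map Subtype.val m ∈ blockSubgroup p b := range_map_subtypeVal p b ▸ ⟨m, rfl⟩
  simp only [MonoidHom.comp_apply, MulEquiv.coe_toMonoidHom, CoprodI.lift_of,
    blockDecomposition_of, blockConj_apply_of_mem hm, MulAut.conj_apply]
  simp [hc']

theorem mem_iSup_of_blockConj_eq_self (hc : ∀ b, c b ∈ blockSubgroup p b) {n : ℤ}
    {g : FreeGroup X} (hg : blockConj p c n g = g) :
    g ∈ ⨆ b, blockSubgroup p b ⊓ centralizer {c b ^ n} := by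
  choose c' hc' using fun b => (range_map_subtypeVal p b ▸ hc b : c b ∈ (map Subtype.val).range)
  have hfix := DFunLike.congr_fun (blockConj_comp_blockDecomposition hc' n)
    ((blockDecomposition p).symm g)
  simp only [MonoidHom.comp_apply, MulEquiv.coe_toMonoidHom, MulEquiv.apply_symm_apply,
    hg] at hfix
  have hmem := CoprodI.mem_closure_fixedPoints_of_lift_eq_self
    (fun b => (MulAut.conj (c' b ^ n)).toMonoidHom) (fun b => (MulAut.conj (c' b ^ n)).injective)
    ((blockDecomposition p).injective
      (hfix.symm.trans ((blockDecomposition p).apply_symm_apply g).symm))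
  suffices hle : Subgroup.closure (⋃ b, CoprodI.of (M := fun b => FreeGroup {x // p x = b}) ''
      {m | MulAut.conj (c' b ^ n) m = m}) ≤
      (⨆ b, blockSubgroup p b ⊓ centralizer {c b ^ n}).comap (blockDecomposition p).toMonoidHom by
    simpa using hle hmem
  refine (closure_le _).2 fun _ hm' => ?_
  obtain ⟨b, m, hm, rfl⟩ := Set.mem_iUnion.1 hm'
  refine mem_iSup_of_mem b ⟨?_, ?_⟩
  · show blockDecomposition p (CoprodI.of m) ∈ blockSubgroup p b
    rw [blockDecomposition_of, ← range_map_subtypeVal]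
    exact ⟨m, rfl⟩
  · show blockDecomposition p (CoprodI.of m) ∈ centralizer {c b ^ n}
    rw [blockDecomposition_of, mem_centralizer_singleton_iff, ← hc', ← _root_.map_zpow,
      ← _root_.map_mul, ← _root_.map_mul, mul_inv_eq_iff_eq_mul.1 hm]

end FreeGroup

lemma Subgroup.commutatorElement_mem {G : Type*} [Group G] {H : Subgroup G} {a b : G}
    (ha : a ∈ H) (hb : b ∈ H) : ⁅a, b⁆ ∈ H := by
  rw [commutatorElement_def]
  exact mul_mem (mul_mem (mul_mem ha hb) (inv_mem ha)) (inv_mem hb)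

open FreeGroup (of blockSubgroup blockConj blockConj_eq_self_of_commute)

namespace CommutatorBlocks

variable {G : Type*} [Group G]

def generators (e : ℕ → G) (i : ℕ) : Set G :=
  {e 1, e 2, e 3} ∪ (fun j => ⁅e (2 * j + 2), e (2 * j + 3)⁆) '' Set.Icc 1 i ∪
    {⁅e (2 * i + 4), e (2 * i + 5)⁆ * ⁅e (2 * i + 6), e (2 * i + 7)⁆}

def conjugator (e : ℕ → G) (i b : ℕ) : G :=
  if b = 0 then 1
  else if b ≤ i then ⁅e (2 * b + 2), e (2 * b + 3)⁆
  else if b = i + 1 then ⁅e (2 * i + 4), e (2 * i + 5)⁆ * ⁅e (2 * i + 6), e (2 * i + 7)⁆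
  else 1

lemma conjugator_mem_closure (e : ℕ → G) (i b : ℕ) :
    conjugator e i b ∈ Subgroup.closure (generators e i) := by
  unfold conjugator
  split_ifs with h0 hi hl
  · exact one_mem _
  · exact Subgroup.subset_closure (.inl (.inr ⟨b, ⟨by omega, hi⟩, rfl⟩))
  · exact Subgroup.subset_closure (.inr rfl)
  · exact one_mem _

/-- The block of the generator `of k`, which is `e (k + 1)`. -/
def letterBlock (i : ℕ) (k : Fin (2 * i + 7)) : ℕ :=
  if k.val ≤ 2 then 0 else if k.val ≤ 2 * i + 2 then (k.val - 1) / 2 else i + 1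

variable {i : ℕ} {e : ℕ → FreeGroup (Fin (2 * i + 7))}

lemma e_succ_mem_blockSubgroup (he : ∀ k : Fin (2 * i + 7), e (k + 1) = of k) {k : ℕ}
    (hk : k < 2 * i + 7) {b : ℕ} (hb : letterBlock i ⟨k, hk⟩ = b) :
    e (k + 1) ∈ blockSubgroup (letterBlock i) b :=
  he ⟨k, hk⟩ ▸ Subgroup.subset_closure ⟨_, hb, rfl⟩

lemma conjugator_mem_blockSubgroup (he : ∀ k : Fin (2 * i + 7), e (k + 1) = of k) (b : ℕ) :
    conjugator e i b ∈ blockSubgroup (letterBlock i) b := by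
  unfold conjugator
  split_ifs with h0 hi hl
  · exact one_mem _
  · exact Subgroup.commutatorElement_mem
      (e_succ_mem_blockSubgroup he (k := 2 * b + 1) (by omega)
        (by simp only [letterBlock]; split_ifs <;> omega))
      (e_succ_mem_blockSubgroup he (k := 2 * b + 2) (by omega)
        (by simp only [letterBlock]; split_ifs <;> omega))
  · subst hl
    exact mul_mem
      (Subgroup.commutatorElement_mem
        (e_succ_mem_blockSubgroup he (k := 2 * i + 3) (by omega) (by simp [letterBlock]))
        (e_succ_mem_blockSubgroup he (k := 2 * i + 4) (by omega) (by simp [letterBlock])))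
      (Subgroup.commutatorElement_mem
        (e_succ_mem_blockSubgroup he (k := 2 * i + 5) (by omega) (by simp [letterBlock]))
        (e_succ_mem_blockSubgroup he (k := 2 * i + 6) (by omega) (by simp [letterBlock])))
  · exact one_mem _

lemma blockConj_conjugator (he : ∀ k : Fin (2 * i + 7), e (k + 1) = of k) (n : ℤ) (b : ℕ) :
    blockConj (letterBlock i) (conjugator e i) n (conjugator e i b) = conjugator e i b :=
  blockConj_eq_self_of_commute (conjugator_mem_blockSubgroup he b) (Commute.refl _) n

lemma blockConj_eq_self_of_mem_closure (he : ∀ k : Fin (2 * i + 7), e (k + 1) = of k) (n : ℤ)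
    {x : FreeGroup (Fin (2 * i + 7))} (hx : x ∈ Subgroup.closure (generators e i)) :
    blockConj (letterBlock i) (conjugator e i) n x = x := by
  refine MonoidHom.eqOn_closure (g := MonoidHom.id _) ?_ hx
  rintro _ ((h | ⟨j, hj, rfl⟩) | rfl)
  · rcases h with rfl | rfl | rfl <;>
      exact blockConj_eq_self_of_commute (b := 0)
        (e_succ_mem_blockSubgroup he (by omega) (by simp [letterBlock])) (Commute.one_right _) n
  · have := blockConj_conjugator he n j
    rwa [conjugator, if_neg (by simp at hj; omega), if_pos hj.2] at this
  · have := blockConj_conjugator he n (i + 1)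
    rwa [conjugator, if_neg (by omega), if_neg (by omega), if_pos rfl] at this

def heisenbergMap {N : ℕ} (j : ℕ) : FreeGroup (Fin N) →* Heisenberg :=
  FreeGroup.lift fun k =>
    if k.val = j then Heisenberg.X else if k.val = j + 1 then Heisenberg.Y else 1

lemma heisenbergMap_e_succ (he : ∀ k : Fin (2 * i + 7), e (k + 1) = of k) (j : ℕ) {k : ℕ}
    (hk : k < 2 * i + 7) : heisenbergMap j (e (k + 1)) =
      if k = j then Heisenberg.X else if k = j + 1 then Heisenberg.Y else 1 := by
  rw [he ⟨k, hk⟩]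
  exact FreeGroup.lift_apply_of

lemma exists_heisenbergMap_conjugator_eq_Z (he : ∀ k : Fin (2 * i + 7), e (k + 1) = of k)
    {b : ℕ} (h₁ : 1 ≤ b) (h₂ : b ≤ i + 1) :
    ∃ θ : FreeGroup (Fin (2 * i + 7)) →* Heisenberg, θ (conjugator e i b) = Heisenberg.Z := by
  rw [conjugator, if_neg (by omega)]
  split_ifs with hb hl
  · refine ⟨heisenbergMap (2 * b + 1), ?_⟩
    rw [map_commutatorElement, heisenbergMap_e_succ he _ (k := 2 * b + 1) (by omega),
      heisenbergMap_e_succ he _ (k := 2 * b + 2) (by omega)]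
    simpa using Heisenberg.commutatorElement_X_Y
  · refine ⟨heisenbergMap (2 * i + 3), ?_⟩
    rw [map_mul, map_commutatorElement, map_commutatorElement,
      heisenbergMap_e_succ he _ (k := 2 * i + 3) (by omega),
      heisenbergMap_e_succ he _ (k := 2 * i + 4) (by omega),
      heisenbergMap_e_succ he _ (k := 2 * i + 5) (by omega),
      heisenbergMap_e_succ he _ (k := 2 * i + 6) (by omega)]
    simpa using Heisenberg.commutatorElement_X_Y
  · omega

lemma iSup_blockSubgroup_inf_centralizer_le (he : ∀ k : Fin (2 * i + 7), e (k + 1) = of k)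
    {n : ℤ} (hn : n ≠ 0) :
    ⨆ b, blockSubgroup (letterBlock i) b ⊓ Subgroup.centralizer {conjugator e i b ^ n} ≤
      Subgroup.closure (generators e i) := by
  refine iSup_le fun b => ?_
  by_cases hb : 1 ≤ b ∧ b ≤ i + 1
  · obtain ⟨θ, hθ⟩ := exists_heisenbergMap_conjugator_eq_Z he hb.1 hb.2
    intro x hx
    exact Subgroup.zpowers_le.2 (conjugator_mem_closure e i b)
      (FreeGroup.mem_zpowers_of_commute_zpow hθ hn
        (Subgroup.mem_centralizer_singleton_iff.1 hx.2))
  · refine inf_le_left.trans ((Subgroup.closure_le _).2 ?_)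
    rintro _ ⟨⟨k, hk⟩, hkb : letterBlock i ⟨k, hk⟩ = b, rfl⟩
    have hk₂ : k ≤ 2 := by
      simp only [letterBlock] at hkb
      split_ifs at hkb <;> omega
    rw [← he]
    apply Subgroup.subset_closure
    interval_cases k <;> simp [generators]

end CommutatorBlocks

/-- In `F_{2i+7}`, with
`B = ⟨e₁,e₂,e₃,⁅e₄,e₅⁆,…,⁅e_{2i+2},e_{2i+3}⁆,⁅e_{2i+4},e_{2i+5}⁆·⁅e_{2i+6},e_{2i+7}⁆⟩`:
any element whose orbit under the automorphisms fixing `B` pointwise is finite must lie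
in `B`. -/
theorem statement13 (i : ℕ)
    (e : ℕ → FreeGroup (Fin (2 * i + 7)))
    (he : ∀ m (_ : 1 ≤ m) (_ : m ≤ 2 * i + 7), e m = FreeGroup.of ⟨m - 1, by omega⟩)
    (B : Subgroup (FreeGroup (Fin (2 * i + 7))))
    (hB : B = Subgroup.closure
      ({e 1, e 2, e 3} ∪ (fun j => ⁅e (2 * j + 2), e (2 * j + 3)⁆) '' Set.Icc 1 i ∪
        {⁅e (2 * i + 4), e (2 * i + 5)⁆ * ⁅e (2 * i + 6), e (2 * i + 7)⁆}))
    (g : FreeGroup (Fin (2 * i + 7)))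
    (hfin : {x : FreeGroup (Fin (2 * i + 7)) |
      ∃ φ : FreeGroup (Fin (2 * i + 7)) ≃* FreeGroup (Fin (2 * i + 7)),
        (∀ b ∈ B, φ b = b) ∧ x = φ g}.Finite) :
    g ∈ B := by
  have he' (k : Fin (2 * i + 7)) : e (k + 1) = of k := by
    simpa using he (k + 1) (by omega) (by omega)
  change B = Subgroup.closure (CommutatorBlocks.generators e i) at hB
  subst hB
  have hc := CommutatorBlocks.conjugator_mem_blockSubgroup he'
  obtain ⟨n, hn, hgn⟩ := FreeGroup.exists_blockConj_eq_self_of_finite hc hfin fun n =>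
    ⟨FreeGroup.blockConjEquiv hc n,
      fun _ => CommutatorBlocks.blockConj_eq_self_of_mem_closure he' n, rfl⟩
  exact CommutatorBlocks.iSup_blockSubgroup_inf_centralizer_le he' hn
    (FreeGroup.mem_iSup_of_blockConj_eq_self hc hgn)
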